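/- Let n ≥ 3 be an integer and let z be a real random variable supported on (0,1) with probability density Γ(n/2)/(Γ(1/2)·Γ((n−1)/2)) · x^{−1/2}·(1−x)^{(n−3)/2} (the Beta(1/2,(n−1)/2) distribution). Then for every δ ∈ (0,1): P( z ≥ δ²/n ) > 1 − δ. -/

import Mathlib

open MeasureTheory Matrix

noncomputable section

open scoped Classical in
/-- Eigenvalues of a real symmetric (Hermitian) matrix; junk value `0` otherwise. -/
noncomputable def eigs {n : ℕ} (Y : Matrix (Fin n) (Fin n) ℝ) : Fin n → ℝ :=
  if h : Y.IsHermitian then h.eigenvalues else 0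

/-- Largest eigenvalue of a real symmetric matrix. -/
noncomputable def lambdaMax {n : ℕ} (Y : Matrix (Fin n) (Fin n) ℝ) : ℝ :=
  ⨆ i, eigs Y i

/-- Operator norm of a real symmetric matrix: largest absolute value of an eigenvalue. -/
noncomputable def opNorm {n : ℕ} (Y : Matrix (Fin n) (Fin n) ℝ) : ℝ :=
  ⨆ i, |eigs Y i|

/-- Frobenius inner product `⟨A, B⟩ = tr (Aᵀ B)`. -/
noncomputable def minner {n : ℕ} (A B : Matrix (Fin n) (Fin n) ℝ) : ℝ :=
  (Aᵀ * B).trace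

/-- Matrix exponential. -/
noncomputable def mexp {n : ℕ} (Y : Matrix (Fin n) (Fin n) ℝ) : Matrix (Fin n) (Fin n) ℝ :=
  NormedSpace.exp Y

/-- The uniform (normalized surface) probability measure on the unit sphere in `ℝⁿ`. -/
noncomputable def sphereUniform (n : ℕ) :
    Measure (Metric.sphere (0 : EuclideanSpace ℝ (Fin n)) 1) :=
  ((volume : Measure (EuclideanSpace ℝ (Fin n))).toSphere Set.univ)⁻¹ •
    (volume : Measure (EuclideanSpace ℝ (Fin n))).toSphere

/-- The randomized mirror projection `P_u(Y) = e^{Y/2} u uᵀ e^{Y/2} / (uᵀ e^Y u)`. -/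
noncomputable def Pu {n : ℕ} (u : Fin n → ℝ) (Y : Matrix (Fin n) (Fin n) ℝ) :
    Matrix (Fin n) (Fin n) ℝ :=
  (u ⬝ᵥ (mexp Y *ᵥ u))⁻¹ •
    (mexp ((2 : ℝ)⁻¹ • Y) * Matrix.vecMulVec u u * mexp ((2 : ℝ)⁻¹ • Y))

/-- The average mirror projection `P̄(Y) = E_u P_u(Y)`, `u` uniform on the unit sphere
(defined entrywise via the Bochner integral). -/
noncomputable def Pbar {n : ℕ} (Y : Matrix (Fin n) (Fin n) ℝ) : Matrix (Fin n) (Fin n) ℝ :=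
  Matrix.of fun i j =>
    ∫ u, Pu (fun k => (u : EuclideanSpace ℝ (Fin n)) k) Y i j ∂(sphereUniform n)

/-- `p̄(Y) = E_u log (uᵀ e^Y u)`, `u` uniform on the unit sphere. -/
noncomputable def pbar {n : ℕ} (Y : Matrix (Fin n) (Fin n) ℝ) : ℝ :=
  ∫ u, Real.log ((fun k => (u : EuclideanSpace ℝ (Fin n)) k) ⬝ᵥ
      (mexp Y *ᵥ fun k => (u : EuclideanSpace ℝ (Fin n)) k)) ∂(sphereUniform n)

/-- Bregman divergence induced by `p̄`. -/
noncomputable def Vbar {n : ℕ} (Y Y' : Matrix (Fin n) (Fin n) ℝ) : ℝ :=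
  pbar Y' - pbar Y - minner (Y' - Y) (Pbar Y)

/-- Matrix multiplicative weights projection `P^mw(Y) = e^Y / tr e^Y`. -/
noncomputable def Pmw {n : ℕ} (Y : Matrix (Fin n) (Fin n) ℝ) : Matrix (Fin n) (Fin n) ℝ :=
  ((mexp Y).trace)⁻¹ • mexp Y

/-- Euclidean norm on `ℝⁿ`. -/
noncomputable def enorm2 {n : ℕ} (v : Fin n → ℝ) : ℝ :=
  Real.sqrt (∑ i, v i ^ 2)

/-- Trace (nuclear) norm of a real symmetric matrix: sum of absolute values of eigenvalues. -/
noncomputable def traceNorm {n : ℕ} (M : Matrix (Fin n) (Fin n) ℝ) : ℝ :=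
  ∑ i, |eigs M i|

/-!
The head `∫₀ᵗ x^(u-1) (1-x)^(v-1) dx` of a Beta integral with `v ≥ 1` is at most
`∫₀ᵗ x^(u-1) dx = tᵘ/u`, and the full integral is `Γ(u)Γ(v)/Γ(u+v)`. For `u = 1/2`,
`v = (n-1)/2`, `t = δ²/n` the lost mass is therefore at most `2 c δ/√n`, where
`c = Γ(n/2)/(Γ(1/2)Γ((n-1)/2)) ≤ √((n-1)/(2π))` by log-convexity of `Γ` (Gautschi's inequality
`Γ(x+1/2) ≤ √x Γ(x)`); so it is below `δ √(2/π) < δ`.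
-/

namespace Real

theorem Gamma_add_half_le {x : ℝ} (hx : 0 < x) : Gamma (x + 1 / 2) ≤ √x * Gamma x := by
  have h := Gamma_mul_add_mul_le_rpow_Gamma_mul_rpow_Gamma hx (by linarith : 0 < x + 1)
    (by norm_num : (0 : ℝ) < 1 / 2) (by norm_num : (0 : ℝ) < 1 / 2) (by norm_num)
  have hΓ := (Gamma_pos_of_pos hx).le
  rwa [show 1 / 2 * x + 1 / 2 * (x + 1) = x + 1 / 2 by ring,
    ← mul_rpow hΓ (Gamma_pos_of_pos (by linarith)).le, ← sqrt_eq_rpow, Gamma_add_one hx.ne',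
    ← mul_assoc, mul_comm _ x, mul_assoc, sqrt_mul hx.le,
    sqrt_mul_self hΓ] at h

theorem Gamma_add_half_div_le {x : ℝ} (hx : 0 < x) :
    Gamma (x + 1 / 2) / (Gamma (1 / 2) * Gamma x) ≤ √(x / π) := by
  rw [Gamma_one_half_eq, sqrt_div hx.le,
    div_le_div_iff₀ (by positivity [Gamma_pos_of_pos hx]) (by positivity)]
  calc Gamma (x + 1 / 2) * √π ≤ √x * Gamma x * √π := by gcongr; exact Gamma_add_half_le hx
    _ = √x * (√π * Gamma x) := by ring

theorem Gamma_mul_Gamma_eq_mul_integral {u v : ℝ} (hu : 0 < u) (hv : 0 < v) :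
    Gamma u * Gamma v = Gamma (u + v) * ∫ x in (0 : ℝ)..1, x ^ (u - 1) * (1 - x) ^ (v - 1) := by
  have h := Complex.Gamma_mul_Gamma_eq_betaIntegral (s := u) (t := v) (by simpa using hu)
    (by simpa using hv)
  have hβ : Complex.betaIntegral u v =
      ((∫ x in (0 : ℝ)..1, x ^ (u - 1) * (1 - x) ^ (v - 1) : ℝ) : ℂ) := by
    rw [Complex.betaIntegral, ← intervalIntegral.integral_ofReal]
    refine intervalIntegral.integral_congr fun x hx => ?_
    rw [Set.uIcc_of_le zero_le_one] at hx
    push_cast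
    rw [Complex.ofReal_cpow hx.1, Complex.ofReal_cpow (sub_nonneg.2 hx.2)]
    push_cast
    ring
  rw [hβ, ← Complex.ofReal_add, Complex.Gamma_ofReal, Complex.Gamma_ofReal,
    Complex.Gamma_ofReal] at h
  exact_mod_cast h

end Real

open Real

section BetaIntegrand

variable {u v : ℝ}

theorem intervalIntegrable_rpow_mul_one_sub_rpow (hu : 0 < u) (hv : 1 ≤ v) (a b : ℝ) :
    IntervalIntegrable (fun x : ℝ => x ^ (u - 1) * (1 - x) ^ (v - 1)) volume a b :=
  (intervalIntegral.intervalIntegrable_rpow' (by linarith)).mul_continuousOn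
    ((continuous_rpow_const (by linarith)).comp (continuous_const.sub continuous_id)).continuousOn

theorem integral_rpow_mul_one_sub_rpow_le (hu : 0 < u) (hv : 1 ≤ v) {t : ℝ} (ht0 : 0 ≤ t)
    (ht1 : t ≤ 1) :
    ∫ x in (0 : ℝ)..t, x ^ (u - 1) * (1 - x) ^ (v - 1) ≤ t ^ u / u := by
  calc ∫ x in (0 : ℝ)..t, x ^ (u - 1) * (1 - x) ^ (v - 1)
      ≤ ∫ x in (0 : ℝ)..t, x ^ (u - 1) := by
        refine intervalIntegral.integral_mono_on ht0
          (intervalIntegrable_rpow_mul_one_sub_rpow hu hv 0 t)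
          (intervalIntegral.intervalIntegrable_rpow' (by linarith)) fun x hx => ?_
        exact mul_le_of_le_one_right (rpow_nonneg hx.1 _)
          (rpow_le_one (by linarith [hx.2]) (by linarith [hx.1]) (by linarith))
    _ = t ^ u / u := by
        rw [integral_rpow (Or.inl (by linarith)), sub_add_cancel, zero_rpow hu.ne', sub_zero]

theorem one_sub_le_integral_beta_density (hu : 0 < u) (hv : 1 ≤ v) {t : ℝ} (ht0 : 0 ≤ t)
    (ht1 : t ≤ 1) :
    1 - Gamma (u + v) / (Gamma u * Gamma v) * (t ^ u / u) ≤
      ∫ x in t..1, Gamma (u + v) / (Gamma u * Gamma v) * x ^ (u - 1) * (1 - x) ^ (v - 1) := by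
  have hΓ : 0 < Gamma u * Gamma v := mul_pos (Gamma_pos_of_pos hu) (Gamma_pos_of_pos (by linarith))
  have hmass : Gamma (u + v) / (Gamma u * Gamma v) *
      ∫ x in (0 : ℝ)..1, x ^ (u - 1) * (1 - x) ^ (v - 1) = 1 := by
    rw [div_mul_eq_mul_div, ← Gamma_mul_Gamma_eq_mul_integral hu (by linarith), div_self hΓ.ne']
  simp_rw [mul_assoc]
  rw [intervalIntegral.integral_const_mul, ← intervalIntegral.integral_interval_sub_left
    (intervalIntegrable_rpow_mul_one_sub_rpow hu hv 0 1)
    (intervalIntegrable_rpow_mul_one_sub_rpow hu hv 0 t), mul_sub, hmass]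
  gcongr
  exact integral_rpow_mul_one_sub_rpow_le hu hv ht0 ht1

end BetaIntegrand

/-- Anti-concentration for `Beta(1/2,(n−1)/2)`:
`P(z ≥ δ²/n) > 1 − δ`, written via the defining density integral. -/
theorem stmt17 (n : ℕ) (hn : 3 ≤ n) (δ : ℝ) (hδ0 : 0 < δ) (hδ1 : δ < 1) :
    1 - δ <
      ∫ x in (δ ^ 2 / n : ℝ)..(1 : ℝ),
        Real.Gamma ((n : ℝ) / 2) / (Real.Gamma (1 / 2) * Real.Gamma (((n : ℝ) - 1) / 2)) *
          x ^ (-(1 : ℝ) / 2) * (1 - x) ^ (((n : ℝ) - 3) / 2) := by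
  have hn3 : (3 : ℝ) ≤ n := by exact_mod_cast hn
  have ht1 : δ ^ 2 / n ≤ 1 := by
    rw [div_le_one (by linarith)]; nlinarith
  have hc := Gamma_add_half_div_le (x := ((n : ℝ) - 1) / 2) (by linarith)
  have htail := one_sub_le_integral_beta_density (u := 1 / 2) (v := ((n : ℝ) - 1) / 2)
    (by norm_num) (by linarith) (by positivity) ht1
  rw [show ((n : ℝ) - 1) / 2 + 1 / 2 = n / 2 by ring] at hc
  rw [show (1 : ℝ) / 2 + ((n : ℝ) - 1) / 2 = n / 2 by ring,
    show (1 : ℝ) / 2 - 1 = -1 / 2 by norm_num,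
    show ((n : ℝ) - 1) / 2 - 1 = ((n : ℝ) - 3) / 2 by ring] at htail
  refine lt_of_lt_of_le ?_ htail
  -- `2 < π` is all the slack needed: `2 √((n-1)/(2π)) · δ/√n < δ`.
  have hhead : 2 * √((((n : ℝ) - 1) / 2) / π) * √(δ ^ 2 / n) < δ := by
    refine lt_of_pow_lt_pow_left₀ 2 hδ0.le ?_
    rw [mul_pow, mul_pow, sq_sqrt (div_nonneg (by linarith) pi_pos.le), sq_sqrt (by positivity)]
    have hπ : 2 * ((n : ℝ) - 1) < π * n := by nlinarith [pi_gt_three]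
    calc 2 ^ 2 * ((((n : ℝ) - 1) / 2) / π) * (δ ^ 2 / n)
          = 2 * ((n : ℝ) - 1) / (π * n) * δ ^ 2 := by field_simp
      _ < 1 * δ ^ 2 := by gcongr; rwa [div_lt_one (by positivity)]
      _ = δ ^ 2 := one_mul _
  rw [← sqrt_eq_rpow, div_div_eq_mul_div, div_one]
  nlinarith [sqrt_nonneg (δ ^ 2 / n)]
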